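/- arXiv:1701.03835 — 2 statements merged into one kernel-verified Lean document; each statement's English description precedes it below -/
import Mathlib

section
/- In the braid group B_q with r < q, the conjugation-type identity (Π_1^{q-r} Π_2^{q-r+1} ⋯ Π_r^{q-1}) (Π_{r+1}^{q-1})^{q-r} = (Π_1^{q-r-1})^{q-r} (Π_1^{q-r} Π_2^{q-r+1} ⋯ Π_r^{q-1}) holds. -/
/-- The generators `σ 1, …, σ (q-1)` of the braid group `B_q`:
far-apart generators commute and adjacent generators satisfy the braid relation. -/
def IsBraidGensUpTo {G : Type*} [Group G] (q : ℕ) (σ : ℕ → G) : Prop :=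
  (∀ i j, 1 ≤ i → i + 1 < j → j + 1 ≤ q → σ i * σ j = σ j * σ i) ∧
  (∀ i, 1 ≤ i → i + 2 ≤ q → σ i * σ (i + 1) * σ i = σ (i + 1) * σ i * σ (i + 1))

/-- `piProd σ a b = σ_b * σ_{b-1} * ⋯ * σ_a` (decreasing indices); identity if `a > b`. -/
def piProd {G : Type*} [Group G] (σ : ℕ → G) (a b : ℕ) : G :=
  (((List.range' a (b + 1 - a)).reverse).map σ).prod

/-- `blockA σ q r = Π_1^r Π_2^{r+1} ⋯ Π_{q-r}^{q-1}`. -/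
def blockA {G : Type*} [Group G] (σ : ℕ → G) (q r : ℕ) : G :=
  ((List.range (q - r)).map (fun j => piProd σ (j + 1) (r + j))).prod

/-- `blockB σ q r = Π_1^{q-r} Π_2^{q-r+1} ⋯ Π_r^{q-1}`. -/
def blockB {G : Type*} [Group G] (σ : ℕ → G) (q r : ℕ) : G :=
  ((List.range r).map (fun j => piProd σ (j + 1) (q - r + j))).prod

section Aux

variable {G : Type*} [Group G] (σ : ℕ → G)

lemma piProd_empty (a b : ℕ) (h : b < a) : piProd σ a b = 1 := by
  have : b + 1 - a = 0 := by omega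
  simp [piProd, this]

lemma piProd_succ_top (a b : ℕ) (h : a ≤ b + 1) : piProd σ a (b + 1) = σ (b + 1) * piProd σ a b := by
  unfold piProd
  have h1 : b + 1 + 1 - a = (b + 1 - a) + 1 := by omega
  have h2 : a + (b + 1 - a) = b + 1 := by omega
  rw [h1, List.range'_concat]
  have h2' : a + 1 * (b + 1 - a) = b + 1 := by omega
  rw [h2']
  simp

variable {q : ℕ} (h : IsBraidGensUpTo q σ)
include h

lemma piProd_comm (a : ℕ) (ha : 1 ≤ a) : ∀ b j, b + 1 < j → j + 1 ≤ q →
    piProd σ a b * σ j = σ j * piProd σ a b := by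
  intro b
  induction b with
  | zero =>
    intro j _ _
    rw [piProd_empty σ a 0 (by omega), one_mul, mul_one]
  | succ b ih =>
    intro j hj hjq
    by_cases hab : a ≤ b + 1
    · rw [piProd_succ_top σ a b hab, mul_assoc, ih j (by omega) hjq, ← mul_assoc,
        h.1 (b+1) j (by omega) (by omega) hjq, mul_assoc]
    · rw [piProd_empty σ a (b+1) (by omega), one_mul, mul_one]

lemma piProd_shift (a : ℕ) (ha : 1 ≤ a) : ∀ b i, a ≤ i → i + 1 ≤ b → b + 1 ≤ q →
    piProd σ a b * σ (i + 1) = σ i * piProd σ a b := by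
  intro b
  induction b with
  | zero => intro i hi hib _; omega
  | succ b ih =>
    intro i hi hib hbq
    by_cases hie : i = b
    · subst hie
      -- i = b : use the braid relation
      obtain ⟨c, rfl⟩ : ∃ c, i = c + 1 := ⟨i - 1, by omega⟩
      rw [piProd_succ_top σ a (c+1) (by omega), piProd_succ_top σ a c (by omega)]
      have hcomm : piProd σ a c * σ (c + 1 + 1) = σ (c + 1 + 1) * piProd σ a c :=
        piProd_comm σ h a ha c (c+1+1) (by omega) (by omega)
      have hbraid := h.2 (c+1) (by omega) (by omega)
      simp only [mul_assoc]
      rw [hcomm]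
      simp only [← mul_assoc]
      rw [hbraid]
    · -- i < b
      have hib' : i + 1 ≤ b := by omega
      rw [piProd_succ_top σ a (b) (by omega), mul_assoc,
        ih i hi hib' (by omega), ← mul_assoc,
        ← h.1 i (b+1) (by omega) (by omega) hbq, mul_assoc]

omit h in
lemma blockB_succ (m r : ℕ) :
    blockB σ (m + r + 1) (r + 1) = blockB σ (m + r) r * piProd σ (r + 1) (m + r) := by
  unfold blockB
  rw [List.range_succ, List.map_append, List.prod_append]
  have e1 : m + r + 1 - (r + 1) = m := by omega
  have e2 : m + r - r = m := by omega
  rw [e1, e2]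
  simp [Nat.add_comm]

lemma blockB_conj_aux (m : ℕ) : ∀ r i, 1 ≤ i → i + 1 ≤ m → m + r ≤ q →
    blockB σ (m + r) r * σ (i + r) = σ i * blockB σ (m + r) r := by
  intro r
  induction r with
  | zero =>
    intro i _ _ _
    simp [blockB]
  | succ r ih =>
    intro i hi him hq'
    have hrec := blockB_succ σ (m := m) (r := r)
    have hq2 : m + r + 1 ≤ q := by omega
    have hshift : piProd σ (r + 1) (m + r) * σ (i + r + 1) = σ (i + r) * piProd σ (r + 1) (m + r) :=
      piProd_shift σ h (r + 1) (by omega) (m + r) (i + r) (by omega) (by omega) (by omega)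
    have e : m + (r + 1) = m + r + 1 := rfl
    rw [e, hrec]
    have e2 : i + (r + 1) = i + r + 1 := rfl
    rw [e2, mul_assoc, hshift, ← mul_assoc, ih i hi him (by omega), mul_assoc]

lemma blockB_conj (r i : ℕ) (hi : 1 ≤ i) (hiq : i + r + 1 ≤ q) :
    blockB σ q r * σ (i + r) = σ i * blockB σ q r := by
  obtain ⟨m, rfl⟩ : ∃ m, q = m + r := ⟨q - r, by omega⟩
  exact blockB_conj_aux σ h m r i hi (by omega) le_rfl

lemma blockB_piProd (r : ℕ) : ∀ k, r + k + 1 ≤ q →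
    blockB σ q r * piProd σ (r + 1) (r + k) = piProd σ 1 k * blockB σ q r := by
  intro k
  induction k with
  | zero =>
    intro _
    rw [piProd_empty σ (r + 1) (r + 0) (by omega), piProd_empty σ 1 0 (by omega), one_mul, mul_one]
  | succ k ih =>
    intro hk
    have e : r + (k + 1) = (r + k) + 1 := rfl
    rw [e, piProd_succ_top σ (r + 1) (r + k) (by omega), ← mul_assoc]
    have hconj : blockB σ q r * σ (k + 1 + r) = σ (k + 1) * blockB σ q r :=
      blockB_conj σ h r (k + 1) (by omega) (by omega)
    have e2 : r + k + 1 = k + 1 + r := by omega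
    rw [e2, hconj, mul_assoc, ih (by omega), ← mul_assoc,
      ← piProd_succ_top σ 1 k (by omega)]

end Aux

/-- In `B_q`, for `1 ≤ r < q`,
`(Π_1^{q-r} ⋯ Π_r^{q-1})(Π_{r+1}^{q-1})^{q-r} = (Π_1^{q-r-1})^{q-r}(Π_1^{q-r} ⋯ Π_r^{q-1})`. -/
theorem stmt9 {G : Type*} [Group G] (q : ℕ) (σ : ℕ → G) (h : IsBraidGensUpTo q σ)
    (r : ℕ) (hr : 1 ≤ r) (hrq : r < q) :
    blockB σ q r * (piProd σ (r + 1) (q - 1)) ^ (q - r) =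
      (piProd σ 1 (q - r - 1)) ^ (q - r) * blockB σ q r := by
  have key : blockB σ q r * piProd σ (r + 1) (q - 1) =
      piProd σ 1 (q - r - 1) * blockB σ q r := by
    have e : q - 1 = r + (q - r - 1) := by omega
    rw [e]
    exact blockB_piProd σ h r (q - r - 1) (by omega)
  have key' : SemiconjBy (blockB σ q r) (piProd σ (r + 1) (q - 1)) (piProd σ 1 (q - r - 1)) := key
  exact (key'.pow_right (q - r)).eq
end

section
/- In the braid group B_q, the identity (Π_1^{q-1})^e (Π_1^{r-1})^{-r} = (Π_1^{q-1})^{e-r} (Π_1^{q-r} Π_2^{q-r+1} ⋯ Π_{r-1}^{q-2} Π_r^{q-1}) holds whenever r ≤ e < q, exhibiting the left side as a positive braid. -/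
private lemma listProd_shift {G : Type*} [Group G] (P : G) (τ ρ : ℕ → G) :
    ∀ l : List ℕ, (∀ j ∈ l, P * τ j = ρ j * P) →
      P * (l.map τ).prod = (l.map ρ).prod * P
  | [], _ => by simp
  | (a :: l), h => by
    have h1 := h a (by simp)
    have h2 := listProd_shift P τ ρ l (fun j hj => h j (by simp [hj]))
    simp only [List.map_cons, List.prod_cons]
    rw [← mul_assoc, h1, mul_assoc, h2, mul_assoc]

private lemma piProd_split {G : Type*} [Group G] (σ : ℕ → G) (a b c : ℕ)
    (h1 : a ≤ b + 1) (h2 : b ≤ c) :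
    piProd σ a c = piProd σ (b + 1) c * piProd σ a b := by
  unfold piProd
  rw [show c + 1 - (b + 1) = c - b by omega,
    show c + 1 - a = (b + 1 - a) + (c - b) by omega,
    ← List.range'_append (s := a) (m := b + 1 - a) (n := c - b) (step := 1),
    show a + 1 * (b + 1 - a) = b + 1 by omega,
    List.reverse_append, List.map_append, List.prod_append]

private lemma piProd_bot {G : Type*} [Group G] (σ : ℕ → G) (a b : ℕ) (hab : a ≤ b) :
    piProd σ a b = piProd σ (a + 1) b * σ a := by
  rw [piProd_split σ a a b (by omega) hab]
  congr 1
  unfold piProd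
  simp [show a + 1 - a = 1 by omega]

private lemma piProd_map_succ {G : Type*} [Group G] (σ : ℕ → G) (a b : ℕ) :
    piProd σ (a + 1) (b + 1) =
      (((List.range' a (b + 1 - a)).reverse).map (fun j => σ (1 + j))).prod := by
  unfold piProd
  rw [show b + 1 + 1 - (a + 1) = b + 1 - a from by omega,
    show a + 1 = 1 + a from by omega, ← List.map_add_range' (a := 1) a (b + 1 - a) 1,
    ← List.map_reverse, List.map_map]
  rfl

section Main

variable {G : Type*} [Group G] (q : ℕ) (σ : ℕ → G)

private lemma sigma_shift (h : IsBraidGensUpTo q σ) (i : ℕ) (h1 : 1 ≤ i) (h2 : i + 2 ≤ q) :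
    piProd σ 1 (q - 1) * σ (i + 1) = σ i * piProd σ 1 (q - 1) := by
  obtain ⟨hc, hb⟩ := h
  have split1 : piProd σ 1 (q - 1) = piProd σ i (q - 1) * piProd σ 1 (i - 1) := by
    have := piProd_split σ 1 (i - 1) (q - 1) (by omega) (by omega)
    rwa [show i - 1 + 1 = i by omega] at this
  have bot1 : piProd σ i (q - 1) = piProd σ (i + 1) (q - 1) * σ i :=
    piProd_bot σ i (q - 1) (by omega)
  have bot2 : piProd σ (i + 1) (q - 1) = piProd σ (i + 2) (q - 1) * σ (i + 1) :=
    piProd_bot σ (i + 1) (q - 1) (by omega)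
  -- low block commutes with σ (i+1)
  have lowcomm : σ (i + 1) * piProd σ 1 (i - 1) = piProd σ 1 (i - 1) * σ (i + 1) := by
    unfold piProd
    refine listProd_shift (σ (i + 1)) σ σ _ (fun j hj => ?_)
    rw [List.mem_reverse, List.mem_range'_1] at hj
    exact (hc j (i + 1) hj.1 (by omega) (by omega)).symm
  -- σ i commutes with high block
  have highcomm : σ i * piProd σ (i + 2) (q - 1) = piProd σ (i + 2) (q - 1) * σ i := by
    unfold piProd
    refine listProd_shift (σ i) σ σ _ (fun j hj => ?_)
    rw [List.mem_reverse, List.mem_range'_1] at hj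
    exact hc i j h1 (by omega) (by omega)
  have key2 : piProd σ (i + 2) (q - 1) * (σ i * σ (i + 1) * σ i) =
      σ i * (piProd σ (i + 2) (q - 1) * σ (i + 1) * σ i) := by
    calc piProd σ (i + 2) (q - 1) * (σ i * σ (i + 1) * σ i)
        = (piProd σ (i + 2) (q - 1) * σ i) * (σ (i + 1) * σ i) := by
          simp only [mul_assoc]
      _ = (σ i * piProd σ (i + 2) (q - 1)) * (σ (i + 1) * σ i) := by rw [← highcomm]
      _ = σ i * (piProd σ (i + 2) (q - 1) * σ (i + 1) * σ i) := by
          simp only [mul_assoc]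
  calc piProd σ 1 (q - 1) * σ (i + 1)
      = piProd σ (i + 2) (q - 1) * (σ (i + 1) * σ i * σ (i + 1)) * piProd σ 1 (i - 1) := by
        rw [split1, bot1, bot2]
        simp only [mul_assoc]
        rw [← lowcomm]
    _ = piProd σ (i + 2) (q - 1) * (σ i * σ (i + 1) * σ i) * piProd σ 1 (i - 1) := by
        rw [hb i h1 h2]
    _ = σ i * piProd σ 1 (q - 1) := by
        rw [key2, split1, bot1, bot2]
        simp only [mul_assoc]

private lemma block_shift (h : IsBraidGensUpTo q σ) (a b : ℕ) (h1 : 1 ≤ a) (h2 : b + 1 ≤ q - 1) :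
    piProd σ 1 (q - 1) * piProd σ (a + 1) (b + 1) = piProd σ a b * piProd σ 1 (q - 1) := by
  rw [piProd_map_succ]
  have hs : ∀ j ∈ (List.range' a (b + 1 - a)).reverse,
      piProd σ 1 (q - 1) * (fun j => σ (1 + j)) j = σ j * piProd σ 1 (q - 1) := by
    intro j hj
    rw [List.mem_reverse, List.mem_range'_1] at hj
    show piProd σ 1 (q - 1) * σ (1 + j) = σ j * piProd σ 1 (q - 1)
    rw [Nat.add_comm]
    exact sigma_shift q σ h j (by omega) (by omega)
  have := listProd_shift (piProd σ 1 (q - 1)) (fun j => σ (1 + j)) σ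
    ((List.range' a (b + 1 - a)).reverse) hs
  rw [this]
  rfl

private lemma key_induction (h : IsBraidGensUpTo q σ) (r : ℕ) (hr1 : 1 ≤ r) (hrq : r + 1 ≤ q) :
    ∀ k, k ≤ r → (piProd σ 1 (q - 1)) ^ k =
      ((List.range k).map (fun i => piProd σ (r - k + 1 + i) (q - k + i))).prod *
        (piProd σ 1 (r - 1)) ^ k := by
  intro k
  induction k with
  | zero => intro _; simp
  | succ k ih =>
    intro hk
    have hkr : k ≤ r := by omega
    have IH := ih hkr
    have shift : piProd σ 1 (q - 1) *
        ((List.range k).map (fun i => piProd σ (r - k + 1 + i) (q - k + i))).prod =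
        ((List.range k).map (fun i => piProd σ (r - k + i) (q - k - 1 + i))).prod *
          piProd σ 1 (q - 1) := by
      refine listProd_shift _ _ _ _ (fun i hi => ?_)
      rw [List.mem_range] at hi
      show piProd σ 1 (q - 1) * piProd σ (r - k + 1 + i) (q - k + i) = _
      have e1 : r - k + 1 + i = (r - k + i) + 1 := by omega
      have e2 : q - k + i = (q - k - 1 + i) + 1 := by omega
      rw [e1, e2]
      exact block_shift q σ h (r - k + i) (q - k - 1 + i) (by omega) (by omega)
    have split1 : piProd σ 1 (q - 1) = piProd σ r (q - 1) * piProd σ 1 (r - 1) := by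
      have := piProd_split σ 1 (r - 1) (q - 1) (by omega) (by omega)
      rwa [show r - 1 + 1 = r from by omega] at this
    have target : ((List.range (k + 1)).map
        (fun i => piProd σ (r - (k + 1) + 1 + i) (q - (k + 1) + i))).prod =
        ((List.range k).map (fun i => piProd σ (r - k + i) (q - k - 1 + i))).prod *
          piProd σ r (q - 1) := by
      rw [List.range_succ, List.map_append, List.prod_append]
      congr 1
      · refine congrArg List.prod (List.map_congr_left (fun i hi => ?_))
        rw [List.mem_range] at hi
        congr 1; omega
      · simp only [List.map_cons, List.map_nil, List.prod_cons, List.prod_nil, mul_one]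
        congr 1 <;> omega
    calc (piProd σ 1 (q - 1)) ^ (k + 1)
        = piProd σ 1 (q - 1) * (piProd σ 1 (q - 1)) ^ k := by rw [pow_succ']
      _ = piProd σ 1 (q - 1) *
          (((List.range k).map (fun i => piProd σ (r - k + 1 + i) (q - k + i))).prod *
            (piProd σ 1 (r - 1)) ^ k) := by rw [IH]
      _ = ((List.range k).map (fun i => piProd σ (r - k + i) (q - k - 1 + i))).prod *
            piProd σ 1 (q - 1) * (piProd σ 1 (r - 1)) ^ k := by
          rw [← mul_assoc, shift]
      _ = (((List.range k).map (fun i => piProd σ (r - k + i) (q - k - 1 + i))).prod *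
            piProd σ r (q - 1)) * (piProd σ 1 (r - 1)) ^ (k + 1) := by
          rw [split1, pow_succ']
          simp only [mul_assoc]
      _ = _ := by rw [target]

end Main

/-- In `B_q`, for `2 ≤ r ≤ e < q`,
`(Π_1^{q-1})^e (Π_1^{r-1})^{-r} = (Π_1^{q-1})^{e-r}(Π_1^{q-r} Π_2^{q-r+1} ⋯ Π_r^{q-1})`. -/
theorem stmt18 {G : Type*} [Group G] (q : ℕ) (σ : ℕ → G) (h : IsBraidGensUpTo q σ)
    (r e : ℕ) (hr : 2 ≤ r) (hre : r ≤ e) (heq : e < q) :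
    (piProd σ 1 (q - 1)) ^ e * ((piProd σ 1 (r - 1)) ^ r)⁻¹ =
      (piProd σ 1 (q - 1)) ^ (e - r) * blockB σ q r := by
  have key := key_induction q σ h r (by omega) (by omega) r le_rfl
  have hblock : ((List.range r).map
      (fun i => piProd σ (r - r + 1 + i) (q - r + i))).prod = blockB σ q r := by
    unfold blockB
    refine congrArg List.prod (List.map_congr_left (fun i hi => ?_))
    congr 1
    omega
  rw [hblock] at key
  have he : e = (e - r) + r := by omega
  conv_lhs => rw [he, pow_add, key]
  rw [mul_assoc, mul_inv_cancel_right]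
end
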